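/- arXiv:1704.05046 — 4 statements merged into one kernel-verified Lean document; each statement's English description precedes it below -/
import Mathlib

section
/- Let (Ω, m₀, μ) be a probability space and let m₁ ⊆ m₂ ⊆ m₀ be sub-σ-algebras. Let F, G : Ω → ℝ be square-integrable with respect to μ, suppose F is m₂-measurable, and suppose the conditional expectation μ[G | m₂] is almost everywhere equal to an m₁-measurable function. Then ∫ F·G dμ = ∫ μ[F | m₁]·μ[G | m₂] dμ. -/
open MeasureTheory

/-
Pulling a factor that is measurable for the conditioning σ-algebra out of a conditional
expectation shows `∫ f g = ∫ f μ[g|m]` whenever `f` is `m`-measurable. Apply this with `m₂`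
to replace `G` by `μ[G|m₂]`; since `μ[G|m₂]` is a.e. `m₁`-measurable, apply it again with `m₁`
to replace `F` by `μ[F|m₁]`. Square integrability makes every product integrable.
-/

theorem integral_mul_condExp_of_aestronglyMeasurable_left {Ω : Type*} {m m₀ : MeasurableSpace Ω}
    {μ : Measure Ω} (hm : m ≤ m₀) [SigmaFinite (μ.trim hm)] {f g : Ω → ℝ}
    (hf : AEStronglyMeasurable[m] f μ) (hfg : Integrable (f * g) μ) (hg : Integrable g μ) :
    ∫ ω, f ω * (μ[g|m]) ω ∂μ = ∫ ω, f ω * g ω ∂μ :=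
  calc ∫ ω, f ω * (μ[g|m]) ω ∂μ = ∫ ω, (μ[f * g|m]) ω ∂μ :=
        integral_congr_ae (condExp_mul_of_aestronglyMeasurable_left hf hfg hg).symm
    _ = ∫ ω, f ω * g ω ∂μ := integral_condExp hm

/-- If `m₁ ⊆ m₂` are sub-σ-algebras, `F, G` are square-integrable, `F` is `m₂`-measurable and
`μ[G | m₂]` is a.e. equal to an `m₁`-measurable function, then
`∫ F·G dμ = ∫ μ[F | m₁] · μ[G | m₂] dμ`. -/
theorem stmt_2 {Ω : Type*} {m₀ : MeasurableSpace Ω} {μ : Measure Ω} [IsProbabilityMeasure μ]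
    {m₁ m₂ : MeasurableSpace Ω} (h12 : m₁ ≤ m₂) (h20 : m₂ ≤ m₀)
    (F G : Ω → ℝ) (hF : MemLp F 2 μ) (hG : MemLp G 2 μ)
    (hFmeas : Measurable[m₂] F)
    (hGcond : ∃ g : Ω → ℝ, Measurable[m₁] g ∧ μ[G|m₂] =ᵐ[μ] g) :
    ∫ ω, F ω * G ω ∂μ = ∫ ω, (μ[F|m₁]) ω * (μ[G|m₂]) ω ∂μ := by
  obtain ⟨g, hg, hGg⟩ := hGcond
  have hGm₁ : AEStronglyMeasurable[m₁] (μ[G|m₂]) μ := ⟨g, hg.stronglyMeasurable, hGg⟩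
  have hGm₂ : MemLp (μ[G|m₂]) 2 μ := hG.condExp one_le_two
  calc ∫ ω, F ω * G ω ∂μ = ∫ ω, F ω * (μ[G|m₂]) ω ∂μ :=
        (integral_mul_condExp_of_aestronglyMeasurable_left h20
          hFmeas.aestronglyMeasurable (hF.integrable_mul hG) (hG.integrable one_le_two)).symm
    _ = ∫ ω, (μ[G|m₂]) ω * F ω ∂μ := by simp only [mul_comm]
    _ = ∫ ω, (μ[G|m₂]) ω * (μ[F|m₁]) ω ∂μ :=
        (integral_mul_condExp_of_aestronglyMeasurable_left (h12.trans h20)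
          hGm₁ (hGm₂.integrable_mul hF) (hF.integrable one_le_two)).symm
    _ = ∫ ω, (μ[F|m₁]) ω * (μ[G|m₂]) ω ∂μ := by simp only [mul_comm]
end

section
/- Let (Ω, μ) be a probability space and X : Ω → ℝᵖ a random vector with E‖X‖² < ∞. Let B be a real p×d matrix and set Z := BᵀX (so Z_k = Σ_j B_{jk} X_j). Suppose there exist c₀ ∈ ℝᵖ and a real p×d matrix C such that the conditional expectation of X given the σ-algebra generated by Z satisfies E[X | σ(Z)] = c₀ + C·Z almost everywhere. Then Σ·B = C·(Bᵀ·Σ·B), where Σ is the covariance matrix of X, with entries Σ_{ij} = E[X_i X_j] − E[X_i]E[X_j]. -/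
/-!
Conditioning on `σ(Z)` does not change the covariance with a `σ(Z)`-measurable variable (tower
property plus pulling out what is known), so for every `i` and `l`
`Cov(Xᵢ, Z_l) = Cov(c₀ᵢ + ∑ₖ C_ik Z_k, Z_l) = ∑ₖ C_ik Cov(Z_k, Z_l)`.
Bilinearity of the covariance identifies the two ends with `(Σ B)_il` and `(C Bᵀ Σ B)_il`.
-/

open MeasureTheory Matrix ProbabilityTheory

section Covariance

variable {Ω ι : Type*} {mΩ : MeasurableSpace Ω} {μ : Measure Ω}

lemma covariance_eq_of_condExp_ae_eq [IsProbabilityMeasure μ] {m : MeasurableSpace Ω}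
    (hm : m ≤ mΩ) {X Y W : Ω → ℝ} (hX : MemLp X 2 μ) (hY : MemLp Y 2 μ)
    (hYm : AEStronglyMeasurable[m] Y μ) (hW : μ[X|m] =ᵐ[μ] W) :
    cov[X, Y; μ] = cov[W, Y; μ] := by
  have hW2 : MemLp W 2 μ := (hX.condExp (m := m) one_le_two).ae_eq hW
  have hmean : μ[W] = μ[X] := (integral_congr_ae hW).symm.trans (integral_condExp hm)
  have hprod : ∫ ω, (W * Y) ω ∂μ = ∫ ω, (X * Y) ω ∂μ :=
    calc ∫ ω, (W * Y) ω ∂μ = ∫ ω, (μ[X|m] * Y) ω ∂μ := integral_congr_ae (hW.symm.mul .rfl)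
      _ = ∫ ω, μ[X * Y|m] ω ∂μ := integral_congr_ae
          (condExp_mul_of_aestronglyMeasurable_right hYm (hX.integrable_mul hY)
            (hX.integrable one_le_two)).symm
      _ = ∫ ω, (X * Y) ω ∂μ := integral_condExp hm
  rw [covariance_eq_sub hX hY, covariance_eq_sub hW2 hY, hmean, hprod]

variable [Fintype ι] [IsFiniteMeasure μ] {X : ι → Ω → ℝ} {Y : Ω → ℝ}

lemma covariance_fun_sum_mul_left (hX : ∀ i, MemLp (X i) 2 μ) (hY : MemLp Y 2 μ) (a : ι → ℝ) :
    cov[fun ω ↦ ∑ i, a i * X i ω, Y; μ] = ∑ i, a i * cov[X i, Y; μ] := by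
  rw [covariance_fun_sum_left (fun i ↦ (hX i).const_mul (a i)) hY]
  simp only [covariance_const_mul_left]

lemma covariance_fun_sum_mul_right (hX : ∀ i, MemLp (X i) 2 μ) (hY : MemLp Y 2 μ) (a : ι → ℝ) :
    cov[Y, fun ω ↦ ∑ i, a i * X i ω; μ] = ∑ i, a i * cov[Y, X i; μ] := by
  rw [covariance_fun_sum_right (fun i ↦ (hX i).const_mul (a i)) hY]
  simp only [covariance_const_mul_right]

end Covariance

/-- Linearity condition: if `E[X | σ(BᵀX)] = c₀ + C·(BᵀX)` a.e., then `Σ·B = C·(Bᵀ·Σ·B)`,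
where `Σ` is the covariance matrix of `X`. -/
theorem stmt_4 {Ω : Type*} {mΩ : MeasurableSpace Ω} (μ : Measure Ω) [IsProbabilityMeasure μ]
    {p d : ℕ} (X : Ω → Fin p → ℝ) (hXmeas : Measurable X)
    (hX2 : ∀ i, MemLp (fun ω => X ω i) 2 μ)
    (B : Matrix (Fin p) (Fin d) ℝ)
    (Z : Ω → Fin d → ℝ) (hZ : Z = fun ω k => ∑ j, B j k * X ω j)
    (c₀ : Fin p → ℝ) (C : Matrix (Fin p) (Fin d) ℝ)
    (hlin : ∀ i, μ[fun ω => X ω i | MeasurableSpace.comap Z inferInstance]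
      =ᵐ[μ] fun ω => c₀ i + ∑ k, C i k * Z ω k)
    (Cov : Matrix (Fin p) (Fin p) ℝ)
    (hCov : Cov = fun i j =>
      (∫ ω, X ω i * X ω j ∂μ) - (∫ ω, X ω i ∂μ) * (∫ ω, X ω j ∂μ)) :
    Cov * B = C * (Bᵀ * Cov * B) := by
  have hZk (k : Fin d) : (fun ω ↦ Z ω k) = fun ω ↦ ∑ j, B j k * X ω j := by rw [hZ]
  have hZ2 (k : Fin d) : MemLp (fun ω ↦ Z ω k) 2 μ := by
    rw [hZk]
    exact memLp_finsetSum _ fun j _ ↦ (hX2 j).const_mul (B j k)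
  have hm : MeasurableSpace.comap Z inferInstance ≤ mΩ := by
    refine Measurable.comap_le ?_
    rw [hZ]
    fun_prop
  have hZm (k : Fin d) :
      AEStronglyMeasurable[MeasurableSpace.comap Z inferInstance] (fun ω ↦ Z ω k) μ :=
    ((measurable_pi_apply k).comp (comap_measurable Z)).aestronglyMeasurable
  have hCov_eq (i j : Fin p) : Cov i j = cov[fun ω ↦ X ω i, fun ω ↦ X ω j; μ] := by
    rw [hCov, covariance_eq_sub (hX2 i) (hX2 j)]
    rfl
  have hXZ (i : Fin p) (l : Fin d) : cov[fun ω ↦ X ω i, fun ω ↦ Z ω l; μ] = (Cov * B) i l := by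
    rw [hZk, covariance_fun_sum_mul_right (X := fun j ω ↦ X ω j) hX2 (hX2 i), mul_apply]
    simp only [hCov_eq, mul_comm]
  have hZZ (k l : Fin d) : cov[fun ω ↦ Z ω k, fun ω ↦ Z ω l; μ] = (Bᵀ * Cov * B) k l := by
    rw [hZk k, covariance_fun_sum_mul_left (X := fun j ω ↦ X ω j) hX2 (hZ2 l), Matrix.mul_assoc,
      mul_apply]
    simp only [hXZ, transpose_apply]
  ext i l
  rw [← hXZ, covariance_eq_of_condExp_ae_eq hm (hX2 i) (hZ2 l) (hZm l) (hlin i),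
    covariance_const_add_left (integrable_finsetSum _ fun k _ ↦
      ((hZ2 k).integrable one_le_two).const_mul (C i k)),
    covariance_fun_sum_mul_left (X := fun k ω ↦ Z ω k) hZ2 (hZ2 l), mul_apply]
  simp only [hZZ]
end

section
/- Let (Ω, m₀, μ) be a probability space, m ⊆ m₀ a sub-σ-algebra, w : Ω → ℝ a nonnegative integrable function, and F : Ω → ℝ a bounded measurable function. Define F* : Ω → ℝ by F* = μ[F·w | m]/μ[w | m] on the set where μ[w | m] > 0 and F* = 0 elsewhere. Then for every bounded m-measurable function g : Ω → ℝ, ∫ (F − F*)·g·w dμ = 0. -/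
open MeasureTheory

/-- Weighted-projection identity behind the nuisance tangent space computation: with
`F* = μ[F·w | m]/μ[w | m]` (set to `0` where `μ[w | m] ≤ 0`), one has
`∫ (F − F*)·g·w dμ = 0` for every bounded `m`-measurable `g`. -/
theorem stmt_12 {Ω : Type*} {m : MeasurableSpace Ω} {m₀ : MeasurableSpace Ω} (μ : Measure Ω) [IsProbabilityMeasure μ]
    (hm : m ≤ m₀)
    (w : Ω → ℝ) (hw_nonneg : ∀ ω, 0 ≤ w ω) (hw_int : Integrable w μ)
    (F : Ω → ℝ) (hF_meas : Measurable F) (CF : ℝ) (hF_bdd : ∀ ω, |F ω| ≤ CF)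
    (Fstar : Ω → ℝ)
    (hFstar : Fstar = fun ω =>
      if 0 < (μ[w|m]) ω then (μ[fun ω' => F ω' * w ω'|m]) ω / (μ[w|m]) ω else 0) :
    ∀ g : Ω → ℝ, Measurable[m] g → (∃ Cg : ℝ, ∀ ω, |g ω| ≤ Cg) →
      ∫ ω, (F ω - Fstar ω) * g ω * w ω ∂μ = 0 := by
  intro g hg_meas hg_bdd
  obtain ⟨Cg, hg_bdd⟩ := hg_bdd
  haveI : SigmaFinite (μ.trim hm) := inferInstance
  set C : ℝ := max CF 0 with hC
  have hF_bdd' : ∀ ω, |F ω| ≤ C := fun ω => (hF_bdd ω).trans (le_max_left _ _)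
  set Cg' : ℝ := max Cg 0 with hCg'
  have hg_bdd' : ∀ ω, |g ω| ≤ Cg' := fun ω => (hg_bdd ω).trans (le_max_left _ _)
  set cw : Ω → ℝ := μ[w|m] with hcw
  set cfw : Ω → ℝ := μ[fun ω' => F ω' * w ω'|m] with hcfw
  -- integrability of F * w
  have hFw_int : Integrable (fun ω => F ω * w ω) μ :=
    hw_int.bdd_mul hF_meas.aestronglyMeasurable
      (Filter.Eventually.of_forall fun ω => by simpa using hF_bdd' ω)
  -- cw nonneg a.e.
  have hcw_nonneg : 0 ≤ᵐ[μ] cw := condExp_nonneg (Filter.Eventually.of_forall hw_nonneg)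
  -- |cfw| ≤ C * cw a.e.
  have habs : ∀ᵐ ω ∂μ, |cfw ω| ≤ C * cw ω := by
    have h1 : cfw ≤ᵐ[μ] μ[fun ω => C * w ω|m] :=
      condExp_mono hFw_int (hw_int.const_mul C)
        (Filter.Eventually.of_forall fun ω =>
          (le_abs_self _).trans (by
            rw [abs_mul]
            exact mul_le_mul_of_nonneg_right (hF_bdd' ω) (by simpa using abs_nonneg (w ω) |>.trans (le_of_eq (abs_of_nonneg (hw_nonneg ω)))) |>.trans
              (mul_le_mul_of_nonneg_left (le_of_eq (abs_of_nonneg (hw_nonneg ω))) (le_max_right CF 0))))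
    have h2 : μ[fun ω => -(C * w ω)|m] ≤ᵐ[μ] cfw :=
      condExp_mono ((hw_int.const_mul C).neg) hFw_int
        (Filter.Eventually.of_forall fun ω => by
          have := (abs_le.mp (by
            rw [abs_mul]
            exact mul_le_mul (hF_bdd' ω) (le_of_eq (abs_of_nonneg (hw_nonneg ω))) (abs_nonneg _) (le_max_right CF 0) : |F ω * w ω| ≤ C * w ω)).1
          simpa using this)
    have hsm1 : μ[fun ω => C * w ω|m] =ᵐ[μ] fun ω => C * cw ω := by
      exact condExp_smul (μ := μ) (m := m) C w
    have hsm2 : μ[fun ω => -(C * w ω)|m] =ᵐ[μ] fun ω => -(C * cw ω) := by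
      have : μ[fun ω => -(C * w ω)|m] =ᵐ[μ] -(μ[fun ω => C * w ω|m]) := by
        exact condExp_neg (fun ω => C * w ω) (m := m) (μ := μ)
      filter_upwards [this, hsm1] with ω h h' using by simp [h, h']
    filter_upwards [h1, h2, hsm1, hsm2] with ω h1 h2 h3 h4
    rw [abs_le]
    constructor
    · have := h2; rw [h4] at this; linarith
    · have := h1; rw [h3] at this; linarith
  -- key a.e. identity: Fstar * cw = cfw
  have hkey : ∀ᵐ ω ∂μ, Fstar ω * cw ω = cfw ω := by
    filter_upwards [hcw_nonneg, habs] with ω hpos hab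
    rw [hFstar]
    by_cases h : 0 < cw ω
    · simp only [h, if_true]
      field_simp
    · simp only [h, if_false, zero_mul]
      have hz : cw ω = 0 := le_antisymm (not_lt.mp h) hpos
      have : |cfw ω| ≤ 0 := by rw [hz] at hab; simpa using hab
      symm; simpa using le_antisymm this (abs_nonneg _) |>.symm ▸ (abs_eq_zero.mp (le_antisymm this (abs_nonneg _)))
  -- measurability of Fstar
  have hFstar_sm : StronglyMeasurable[m] Fstar := by
    rw [hFstar]
    have h1 : StronglyMeasurable[m] cw := stronglyMeasurable_condExp
    have h2 : StronglyMeasurable[m] cfw := stronglyMeasurable_condExp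
    exact ((Measurable.ite (measurableSet_lt measurable_const h1.measurable)
      (h2.measurable.div h1.measurable) measurable_const)).stronglyMeasurable
  -- a.e. bound for Fstar
  have hFstar_bdd : ∀ᵐ ω ∂μ, ‖Fstar ω‖ ≤ C := by
    filter_upwards [habs] with ω hab
    rw [hFstar]
    by_cases h : 0 < cw ω
    · simp only [h, if_true, Real.norm_eq_abs, abs_div, abs_of_pos h]
      rw [div_le_iff₀ h]
      exact hab
    · simp only [h, if_false, norm_zero]
      exact le_max_right CF 0
  -- integrability pieces
  have hg_sm : StronglyMeasurable[m] g := hg_meas.stronglyMeasurable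
  have hgFw_int : Integrable (fun ω => g ω * (F ω * w ω)) μ :=
    hFw_int.bdd_mul ((hg_sm.mono hm).aestronglyMeasurable)
      (Filter.Eventually.of_forall fun ω => by simpa using hg_bdd' ω)
  have hFsg_sm : StronglyMeasurable[m] (fun ω => Fstar ω * g ω) := hFstar_sm.mul hg_sm
  have hFsg_bdd : ∀ᵐ ω ∂μ, ‖Fstar ω * g ω‖ ≤ C * Cg' := by
    filter_upwards [hFstar_bdd] with ω h
    rw [Real.norm_eq_abs, abs_mul]
    exact mul_le_mul h (hg_bdd' ω) (abs_nonneg _) ((abs_nonneg _).trans h)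
  have hFsgw_int : Integrable (fun ω => Fstar ω * g ω * w ω) μ :=
    hw_int.bdd_mul ((hFsg_sm.mono hm).aestronglyMeasurable) hFsg_bdd
  -- pull-out computations
  have e1 : ∫ ω, g ω * (F ω * w ω) ∂μ = ∫ ω, g ω * cfw ω ∂μ := by
    rw [← integral_condExp hm (f := fun ω => g ω * (F ω * w ω))]
    refine integral_congr_ae ?_
    exact (condExp_stronglyMeasurable_mul_of_bound hm hg_sm hFw_int Cg'
      (Filter.Eventually.of_forall fun ω => by simpa using hg_bdd' ω) :
      μ[fun ω => g ω * (F ω * w ω)|m] =ᵐ[μ] fun ω => g ω * cfw ω)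
  have e2 : ∫ ω, Fstar ω * g ω * w ω ∂μ = ∫ ω, g ω * cfw ω ∂μ := by
    rw [← integral_condExp hm (f := fun ω => (fun x => Fstar x * g x) ω * w ω)]
    refine integral_congr_ae ?_
    have hpull : μ[fun ω => Fstar ω * g ω * w ω|m] =ᵐ[μ] fun ω => Fstar ω * g ω * cw ω :=
      condExp_stronglyMeasurable_mul_of_bound hm hFsg_sm hw_int (C * Cg') hFsg_bdd
    filter_upwards [hpull, hkey] with ω h1 h2
    rw [h1]
    calc Fstar ω * g ω * cw ω = g ω * (Fstar ω * cw ω) := by ring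
      _ = g ω * cfw ω := by rw [h2]
  -- conclude
  have : ∫ ω, (F ω - Fstar ω) * g ω * w ω ∂μ
      = ∫ ω, g ω * (F ω * w ω) ∂μ - ∫ ω, Fstar ω * g ω * w ω ∂μ := by
    rw [← integral_sub hgFw_int hFsgw_int]
    exact integral_congr_ae (Filter.Eventually.of_forall fun ω => by ring)
  rw [this, e1, e2, sub_self]
end

section
/- Let (Ω, μ) be a probability space, X : Ω → ℝᵖ a random vector with E‖X‖² < ∞, mean vector μ_X = E[X], and invertible covariance matrix Σ (entries Σ_{ij} = E[X_iX_j] − E[X_i]E[X_j]). Let B be a real p×d matrix with BᵀΣB invertible and set P := ΣB(BᵀΣB)⁻¹Bᵀ. Let W : Ω → {0, 1} be measurable with 0 < μ(W = 1) < 1. Assume (i) the linearity condition E[X | σ(BᵀX)] = μ_X + P·(X − μ_X) almost everywhere, and (ii) the conditional-independence identity E[1_{W=1}·X | σ(BᵀX)] = μ[1_{W=1} | σ(BᵀX)]·E[X | σ(BᵀX)] almost everywhere. Then the vector Σ⁻¹·(E[X | W = 1] − E[X | W = 0]) lies in the column space of B, where E[X | W = j] denotes the expectation of X under the conditional probability measure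 μ(· | {W = j}). -/
open MeasureTheory Matrix ProbabilityTheory

/-! Write `v = E[W (X - μX)]`. The conditional-independence identity and the pull-out property
replace `E[W X]` by `E[W E[X | BᵀX]]`, and the linearity condition then gives `P v = v`. As `W`
is the indicator of `{W = 1}`, the difference of the two slice means is
`v / (μ{W = 1} μ{W = 0})`, and `Σ⁻¹ P = B (BᵀΣB)⁻¹ Bᵀ` sends `v` into the column space of `B`. -/

section CondExp

variable {Ω : Type*} {m mΩ : MeasurableSpace Ω} {μ : Measure Ω}

theorem integral_condExp_mul_of_stronglyMeasurable (hm : m ≤ mΩ) [SigmaFinite (μ.trim hm)]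
    {f g : Ω → ℝ} (hg : StronglyMeasurable[m] g) (hfg : Integrable (f * g) μ)
    (hf : Integrable f μ) :
    ∫ ω, μ[f | m] ω * g ω ∂μ = ∫ ω, f ω * g ω ∂μ :=
  calc ∫ ω, μ[f | m] ω * g ω ∂μ = ∫ ω, μ[f * g | m] ω ∂μ :=
        (integral_congr_ae (condExp_mul_of_stronglyMeasurable_right hg hfg hf)).symm
    _ = ∫ ω, f ω * g ω ∂μ := integral_condExp hm

theorem integral_mul_eq_integral_mul_condExp (hm : m ≤ mΩ) [IsFiniteMeasure μ]
    {W Y : Ω → ℝ} (hW : AEStronglyMeasurable W μ) {C : ℝ} (hWC : ∀ᵐ ω ∂μ, ‖W ω‖ ≤ C)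
    (hWY : μ[fun ω => W ω * Y ω | m] =ᵐ[μ] fun ω => μ[W | m] ω * μ[Y | m] ω) :
    ∫ ω, W ω * Y ω ∂μ = ∫ ω, W ω * μ[Y | m] ω ∂μ :=
  calc ∫ ω, W ω * Y ω ∂μ = ∫ ω, μ[fun ω => W ω * Y ω | m] ω ∂μ := (integral_condExp hm).symm
    _ = ∫ ω, μ[W | m] ω * μ[Y | m] ω ∂μ := integral_congr_ae hWY
    _ = ∫ ω, W ω * μ[Y | m] ω ∂μ :=
        integral_condExp_mul_of_stronglyMeasurable hm stronglyMeasurable_condExp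
          (integrable_condExp.bdd_mul hW hWC) (.of_bound hW C hWC)

theorem mulVec_integral_mul_sub_eq_self_of_condExp {ι : Type*} [Fintype ι] (hm : m ≤ mΩ)
    [IsFiniteMeasure μ] {X : Ω → ι → ℝ} (hX : ∀ i, Integrable (fun ω => X ω i) μ)
    (μX : ι → ℝ) (P : Matrix ι ι ℝ) {W : Ω → ℝ} (hW : AEStronglyMeasurable W μ) {C : ℝ}
    (hWC : ∀ᵐ ω ∂μ, ‖W ω‖ ≤ C)
    (hlin : ∀ i, μ[fun ω => X ω i | m] =ᵐ[μ] fun ω => μX i + ∑ j, P i j * (X ω j - μX j))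
    (hcondind : ∀ i, μ[fun ω => W ω * X ω i | m]
      =ᵐ[μ] fun ω => μ[W | m] ω * μ[fun ω' => X ω' i | m] ω) :
    P *ᵥ (fun i => ∫ ω, W ω * (X ω i - μX i) ∂μ) = fun i => ∫ ω, W ω * (X ω i - μX i) ∂μ := by
  have hWX (i) : Integrable (fun ω => W ω * X ω i) μ := (hX i).bdd_mul hW hWC
  have hWc (c : ℝ) : Integrable (fun ω => W ω * c) μ := (integrable_const c).bdd_mul hW hWC
  have hWY (i) : Integrable (fun ω => W ω * (X ω i - μX i)) μ :=
    ((hX i).sub (integrable_const _)).bdd_mul hW hWC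
  funext i
  symm
  calc ∫ ω, W ω * (X ω i - μX i) ∂μ
      = ∫ ω, W ω * X ω i ∂μ - ∫ ω, W ω * μX i ∂μ := by
        simp only [mul_sub]; exact integral_sub (hWX i) (hWc _)
    _ = ∫ ω, W ω * μ[fun ω' => X ω' i | m] ω ∂μ - ∫ ω, W ω * μX i ∂μ := by
        rw [integral_mul_eq_integral_mul_condExp hm hW hWC (hcondind i)]
    _ = ∫ ω, W ω * (μ[fun ω' => X ω' i | m] ω - μX i) ∂μ := by
        simp only [mul_sub]
        exact (integral_sub (integrable_condExp.bdd_mul hW hWC) (hWc _)).symm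
    _ = ∫ ω, ∑ j, P i j * (W ω * (X ω j - μX j)) ∂μ := by
        refine integral_congr_ae ?_
        filter_upwards [hlin i] with ω hω
        rw [hω, add_sub_cancel_left, Finset.mul_sum]
        exact Finset.sum_congr rfl fun j _ => by ring
    _ = (P *ᵥ fun i => ∫ ω, W ω * (X ω i - μX i) ∂μ) i := by
        rw [integral_finsetSum _ fun j _ => (hWY j).const_mul _]
        simp only [integral_const_mul, mulVec, dotProduct]

end CondExp

section Slicing

variable {Ω : Type*} {mΩ : MeasurableSpace Ω} {μ : Measure Ω}

theorem integral_cond {E : Type*} [NormedAddCommGroup E] [NormedSpace ℝ E] (s : Set Ω)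
    (f : Ω → E) : ∫ ω, f ω ∂μ[|s] = (μ.real s)⁻¹ • ∫ ω in s, f ω ∂μ := by
  rw [ProbabilityTheory.cond, integral_smul_measure, ENNReal.toReal_inv, measureReal_def]

theorem integral_cond_sub_integral_cond_compl [IsProbabilityMeasure μ] {s : Set Ω}
    (hs : MeasurableSet s) (hs0 : μ s ≠ 0) (hsc0 : μ sᶜ ≠ 0) {f : Ω → ℝ}
    (hf : Integrable f μ) :
    ∫ ω, f ω ∂μ[|s] - ∫ ω, f ω ∂μ[|sᶜ]
      = (μ.real s * μ.real sᶜ)⁻¹ * ∫ ω in s, (f ω - ∫ ω', f ω' ∂μ) ∂μ := by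
  have ha : μ.real s ≠ 0 := (measureReal_ne_zero_iff).2 hs0
  have hb : μ.real sᶜ ≠ 0 := (measureReal_ne_zero_iff).2 hsc0
  have hab : μ.real s + μ.real sᶜ = 1 := by
    rw [measureReal_add_measureReal_compl hs, probReal_univ]
  have hsplit := integral_add_compl hs hf
  rw [integral_cond, integral_cond, integral_sub hf.integrableOn (integrable_const _),
    setIntegral_const, smul_eq_mul, smul_eq_mul, smul_eq_mul]
  field_simp
  linear_combination (∫ ω in s, f ω ∂μ) * hab - μ.real s * hsplit

theorem integral_mul_eq_setIntegral_of_eq_zero_or_one {W g : Ω → ℝ} (hW : Measurable W)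
    (hW01 : ∀ ω, W ω = 0 ∨ W ω = 1) :
    ∫ ω, W ω * g ω ∂μ = ∫ ω in {ω | W ω = 1}, g ω ∂μ := by
  have hs : MeasurableSet {ω | W ω = 1} := hW (measurableSet_singleton 1)
  rw [← integral_indicator hs]
  congr 1 with ω
  rcases hW01 ω with h | h <;> simp [h]

end Slicing

theorem exists_inv_mulVec_eq_mulVec_of_mulVec_eq {n k R : Type*} [Fintype n] [DecidableEq n]
    [Fintype k] [CommRing R] {S : Matrix n n R} (hS : IsUnit S) (B : Matrix n k R)
    (M : Matrix k n R) {v : n → R} (hv : (S * B * M) *ᵥ v = v) : ∃ c, S⁻¹ *ᵥ v = B *ᵥ c := by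
  refine ⟨M *ᵥ v, ?_⟩
  conv_lhs => rw [← hv]
  rw [mulVec_mulVec, ← Matrix.mul_assoc, ← Matrix.mul_assoc,
    nonsing_inv_mul _ ((isUnit_iff_isUnit_det _).mp hS), Matrix.one_mul, mulVec_mulVec]

theorem stmt_13_general {Ω : Type*} {mΩ : MeasurableSpace Ω} (μ : Measure Ω) [IsProbabilityMeasure μ]
    {p d : ℕ} (X : Ω → Fin p → ℝ) (hXmeas : Measurable X)
    (hX2 : ∀ i, MemLp (fun ω => X ω i) 2 μ)
    (μX : Fin p → ℝ) (hμX : μX = fun i => ∫ ω, X ω i ∂μ)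
    (Cov : Matrix (Fin p) (Fin p) ℝ)
    (hCovInv : IsUnit Cov)
    (B : Matrix (Fin p) (Fin d) ℝ)
    (P : Matrix (Fin p) (Fin p) ℝ) (hP : P = Cov * B * (Bᵀ * Cov * B)⁻¹ * Bᵀ)
    (Z : Ω → Fin d → ℝ) (hZ : Z = fun ω k => ∑ j, B j k * X ω j)
    (W : Ω → ℝ) (hWmeas : Measurable W) (hW01 : ∀ ω, W ω = 0 ∨ W ω = 1)
    (hW1pos : 0 < μ {ω | W ω = 1}) (hW1lt : μ {ω | W ω = 1} < 1)
    (hlin : ∀ i, μ[fun ω => X ω i | MeasurableSpace.comap Z inferInstance]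
      =ᵐ[μ] fun ω => μX i + ∑ j, P i j * (X ω j - μX j))
    (hcondind : ∀ i, μ[fun ω => W ω * X ω i | MeasurableSpace.comap Z inferInstance]
      =ᵐ[μ] fun ω =>
        (μ[W | MeasurableSpace.comap Z inferInstance]) ω *
          (μ[fun ω' => X ω' i | MeasurableSpace.comap Z inferInstance]) ω) :
    ∃ c : Fin d → ℝ,
      Cov⁻¹ *ᵥ (fun i =>
          (∫ ω, X ω i ∂(μ[|{ω | W ω = 1}])) - ∫ ω, X ω i ∂(μ[|{ω | W ω = 0}]))
        = B *ᵥ c := by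
  have hZmeas : Measurable Z := hZ ▸ measurable_pi_lambda _ fun k =>
    Finset.measurable_sum _ fun j _ => measurable_const.mul ((measurable_pi_apply j).comp hXmeas)
  have hX (i) : Integrable (fun ω => X ω i) μ := (hX2 i).integrable one_le_two
  have hW1 : ∀ᵐ ω ∂μ, ‖W ω‖ ≤ 1 := .of_forall fun ω => by rcases hW01 ω with h | h <;> simp [h]
  have hfix := mulVec_integral_mul_sub_eq_self_of_condExp hZmeas.comap_le hX μX P
    hWmeas.aestronglyMeasurable hW1 hlin hcondind
  set s := {ω | W ω = 1}
  have hs : MeasurableSet s := hWmeas (measurableSet_singleton 1)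
  have hsc : {ω | W ω = 0} = sᶜ := by ext ω; rcases hW01 ω with h | h <;> simp [s, h]
  have hsc0 : μ sᶜ ≠ 0 := (prob_compl_eq_zero_iff hs).not.2 hW1lt.ne
  have hdiff : (fun i => ∫ ω, X ω i ∂μ[|s] - ∫ ω, X ω i ∂μ[|{ω | W ω = 0}])
      = (μ.real s * μ.real sᶜ)⁻¹ • fun i => ∫ ω, W ω * (X ω i - μX i) ∂μ := by
    funext i
    rw [hsc, integral_cond_sub_integral_cond_compl hs hW1pos.ne' hsc0 (hX i),
      Pi.smul_apply, smul_eq_mul, integral_mul_eq_setIntegral_of_eq_zero_or_one hWmeas hW01, hμX]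
  rw [hdiff]
  refine exists_inv_mulVec_eq_mulVec_of_mulVec_eq hCovInv B ((Bᵀ * Cov * B)⁻¹ * Bᵀ) ?_
  rw [← Matrix.mul_assoc, ← hP, mulVec_smul, hfix]

/-- Static form of the claim that the sliced inverse regression direction lies in the central
subspace: under the linearity condition and the conditional-independence identity for the
Bernoulli variable `W`, the vector `Σ⁻¹·(E[X | W = 1] − E[X | W = 0])` belongs to the column
space of `B`. -/
theorem stmt_13 {Ω : Type*} {mΩ : MeasurableSpace Ω} (μ : Measure Ω) [IsProbabilityMeasure μ]
    {p d : ℕ} (X : Ω → Fin p → ℝ) (hXmeas : Measurable X)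
    (hX2 : ∀ i, MemLp (fun ω => X ω i) 2 μ)
    (μX : Fin p → ℝ) (hμX : μX = fun i => ∫ ω, X ω i ∂μ)
    (Cov : Matrix (Fin p) (Fin p) ℝ)
    (hCov : Cov = fun i j =>
      (∫ ω, X ω i * X ω j ∂μ) - (∫ ω, X ω i ∂μ) * (∫ ω, X ω j ∂μ))
    (hCovInv : IsUnit Cov)
    (B : Matrix (Fin p) (Fin d) ℝ) (hBinv : IsUnit (Bᵀ * Cov * B))
    (P : Matrix (Fin p) (Fin p) ℝ) (hP : P = Cov * B * (Bᵀ * Cov * B)⁻¹ * Bᵀ)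
    (Z : Ω → Fin d → ℝ) (hZ : Z = fun ω k => ∑ j, B j k * X ω j)
    (W : Ω → ℝ) (hWmeas : Measurable W) (hW01 : ∀ ω, W ω = 0 ∨ W ω = 1)
    (hW1pos : 0 < μ {ω | W ω = 1}) (hW1lt : μ {ω | W ω = 1} < 1)
    (hlin : ∀ i, μ[fun ω => X ω i | MeasurableSpace.comap Z inferInstance]
      =ᵐ[μ] fun ω => μX i + ∑ j, P i j * (X ω j - μX j))
    (hcondind : ∀ i, μ[fun ω => W ω * X ω i | MeasurableSpace.comap Z inferInstance]
      =ᵐ[μ] fun ω =>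
        (μ[W | MeasurableSpace.comap Z inferInstance]) ω *
          (μ[fun ω' => X ω' i | MeasurableSpace.comap Z inferInstance]) ω) :
    ∃ c : Fin d → ℝ,
      Cov⁻¹ *ᵥ (fun i =>
          (∫ ω, X ω i ∂(μ[|{ω | W ω = 1}])) - ∫ ω, X ω i ∂(μ[|{ω | W ω = 0}]))
        = B *ᵥ c :=
  stmt_13_general (mΩ := mΩ) μ X hXmeas hX2 μX hμX Cov hCovInv B P hP Z hZ W hWmeas hW01 hW1pos
    hW1lt hlin hcondind
end
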